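/- arXiv:2010.09567 — 8 statements merged into one kernel-verified Lean document; each statement's English description precedes it below -/
import Mathlib

section
/- Let f be convex and differentiable on a convex set P, let x ∈ P with x = Σ_s α_s s a convex combination of points in a finite set A ⊆ P, and let g = ∇f(x). Define w⁺ = max_{s∈P} ⟨g, x − s⟩, w⁻ = max over u,v in the support of α of ⟨g, v − u⟩, and w = max over s∈P, v in the support of α of ⟨g, v − s⟩. Then max{w⁺, w⁻} ≤ w ≤ w⁺ + w⁻. -/
open RealInnerProductSpace

theorem gap_quantities_inequalities {n : ℕ}
    (P : Set (EuclideanSpace ℝ (Fin n))) (f : EuclideanSpace ℝ (Fin n) → ℝ)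
    (hP : Convex ℝ P) (hf : ConvexOn ℝ P f) (hdiff : ∀ y ∈ P, DifferentiableAt ℝ f y)
    (A : Finset (EuclideanSpace ℝ (Fin n))) (hA : ∀ s ∈ A, s ∈ P)
    (α : EuclideanSpace ℝ (Fin n) → ℝ) (hα0 : ∀ s ∈ A, 0 ≤ α s)
    (hα1 : ∑ s ∈ A, α s = 1)
    (x : EuclideanSpace ℝ (Fin n)) (hx : x = ∑ s ∈ A, α s • s) (hxP : x ∈ P)
    (g : EuclideanSpace ℝ (Fin n)) (hg : HasGradientAt f g x)
    (wp wm w : ℝ)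
    (hwp : IsGreatest {r | ∃ s ∈ P, r = ⟪g, x - s⟫} wp)
    (hwm : IsGreatest {r | ∃ u ∈ A.filter (fun s => 0 < α s),
        ∃ v ∈ A.filter (fun s => 0 < α s), r = ⟪g, v - u⟫} wm)
    (hw : IsGreatest {r | ∃ s ∈ P, ∃ v ∈ A.filter (fun s => 0 < α s),
        r = ⟪g, v - s⟫} w) :
    max wp wm ≤ w ∧ w ≤ wp + wm := by
  classical
  set S := A.filter (fun s => 0 < α s) with hS
  have hSsub : ∀ s ∈ S, s ∈ A := fun s hs => (Finset.mem_filter.1 hs).1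
  have hSpos : ∀ s ∈ S, 0 < α s := fun s hs => (Finset.mem_filter.1 hs).2
  have hSsum : ∑ s ∈ S, α s = 1 := by
    rw [← hα1]
    apply Finset.sum_filter_of_ne
    intro s hs hne
    exact lt_of_le_of_ne (hα0 s hs) (Ne.symm hne)
  have hSne : S.Nonempty := by
    by_contra h
    rw [Finset.not_nonempty_iff_eq_empty] at h
    rw [h, Finset.sum_empty] at hSsum
    norm_num at hSsum
  have hgx : ⟪g, x⟫ = ∑ s ∈ S, α s * ⟪g, s⟫ := by
    rw [hx, inner_sum]
    simp only [real_inner_smul_right]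
    refine (Finset.sum_filter_of_ne ?_).symm
    intro s hs hne
    rcases mul_ne_zero_iff.1 hne with ⟨h1, _⟩
    exact lt_of_le_of_ne (hα0 s hs) (Ne.symm h1)
  -- exists v in S with ⟪g,x⟫ ≤ ⟪g,v⟫
  have hv : ∃ v ∈ S, ⟪g, x⟫ ≤ ⟪g, v⟫ := by
    have hsum : ∑ s ∈ S, α s * ⟪g, x⟫ ≤ ∑ s ∈ S, α s * ⟪g, s⟫ := by
      rw [← Finset.sum_mul, hSsum, one_mul, ← hgx]
    obtain ⟨v, hvS, hvle⟩ := Finset.exists_le_of_sum_le hSne hsum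
    exact ⟨v, hvS, le_of_mul_le_mul_left hvle (hSpos v hvS)⟩
  have hu : ∃ u ∈ S, ⟪g, u⟫ ≤ ⟪g, x⟫ := by
    have hsum : ∑ s ∈ S, α s * ⟪g, s⟫ ≤ ∑ s ∈ S, α s * ⟪g, x⟫ := by
      rw [← Finset.sum_mul, hSsum, one_mul, ← hgx]
    obtain ⟨u, huS, hule⟩ := Finset.exists_le_of_sum_le hSne hsum
    exact ⟨u, huS, le_of_mul_le_mul_left hule (hSpos u huS)⟩
  obtain ⟨v0, hv0S, hv0⟩ := hv
  obtain ⟨u0, hu0S, hu0⟩ := hu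
  constructor
  · apply max_le
    · -- wp ≤ w
      obtain ⟨sp, hspP, hspw⟩ := hwp.1
      have : wp ≤ ⟪g, v0 - sp⟫ := by
        rw [hspw, inner_sub_right, inner_sub_right]
        linarith
      exact this.trans (hw.2 ⟨sp, hspP, v0, hv0S, rfl⟩)
    · -- wm ≤ w
      obtain ⟨u, huS, v, hvS, hmw⟩ := hwm.1
      rw [hmw]
      exact hw.2 ⟨u, hA u (hSsub u huS), v, hvS, rfl⟩
  · -- w ≤ wp + wm
    obtain ⟨s, hsP, v, hvS, hww⟩ := hw.1
    have h1 : ⟪g, x - s⟫ ≤ wp := hwp.2 ⟨s, hsP, rfl⟩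
    have h2 : ⟪g, v - u0⟫ ≤ wm := hwm.2 ⟨u0, hu0S, v, hvS, rfl⟩
    rw [hww]
    simp only [inner_sub_right] at *
    linarith
end

section
/- Let f be convex and differentiable on a compact convex set P and let x ∈ P with x = Σ_s α_s s for weights α over a finite set of points. If w⁺(α) = 0 and w⁻(α) = 0, then x is a minimizer of f over P; conversely, if x minimizes f over P and each point of supp(α) lies in P, then w⁺(α) = 0 and w⁻(α) = 0. -/
/-! Convexity gives `f y - f x ≥ ⟪g, y - x⟫`, so `w⁺ = 0` certifies optimality. Conversely, at a
minimizer `⟪g, s - x⟫ ≥ 0` for every `s ∈ P`, while averaging with the weights `α` gives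
`∑ α_s ⟪g, s - x⟫ = 0`; hence `⟪g, ·⟫` equals `⟪g, x⟫` on `supp α` and `w⁻ = 0`. -/

open RealInnerProductSpace

section FirstOrder

variable {E : Type*} [NormedAddCommGroup E] [NormedSpace ℝ E] {s : Set E} {f : E → ℝ}
  {f' : E →L[ℝ] ℝ} {x y : E}

theorem ConvexOn.le_sub_of_hasFDerivWithinAt (hf : ConvexOn ℝ s f) (hx : x ∈ s) (hy : y ∈ s)
    (hf' : HasFDerivWithinAt f f' s x) : f' (y - x) ≤ f y - f x := by
  let ℓ : ℝ →ᵃ[ℝ] E := AffineMap.lineMap x y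
  have hderiv : HasDerivWithinAt (f ∘ ℓ) (f' (y - x)) (ℓ ⁻¹' s) 0 := by
    refine HasFDerivWithinAt.comp_hasDerivWithinAt 0 ?_ AffineMap.hasDerivWithinAt_lineMap
      (Set.mapsTo_preimage ℓ s)
    simpa [ℓ] using hf'
  simpa [ℓ, slope_def_field] using
    (hf.comp_affineMap ℓ).le_slope_of_hasDerivWithinAt (by simpa [ℓ]) (by simpa [ℓ]) one_pos hderiv

theorem ConvexOn.isMinOn_of_hasFDerivWithinAt (hf : ConvexOn ℝ s f) (hx : x ∈ s)
    (hf' : HasFDerivWithinAt f f' s x) (h : ∀ y ∈ s, 0 ≤ f' (y - x)) : IsMinOn f s x :=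
  fun y hy => show f x ≤ f y by linarith [h y hy, hf.le_sub_of_hasFDerivWithinAt hx hy hf']

theorem IsMinOn.hasFDerivWithinAt_sub_nonneg (hmin : IsMinOn f s x) (hs : Convex ℝ s)
    (hx : x ∈ s) (hy : y ∈ s) (hf' : HasFDerivWithinAt f f' s x) : 0 ≤ f' (y - x) :=
  hmin.localize.hasFDerivWithinAt_nonneg hf'
    (sub_mem_posTangentConeAt_of_segment_subset (hs.segment_subset hx hy))

end FirstOrder

theorem LinearMap.apply_eq_of_forall_le_of_eq_sum_smul {𝕜 E ι : Type*} [Field 𝕜]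
    [LinearOrder 𝕜] [IsStrictOrderedRing 𝕜] [AddCommGroup E] [Module 𝕜 E] (ℓ : E →ₗ[𝕜] 𝕜)
    {A : Finset ι} {p : ι → E} {α : ι → 𝕜} {x : E}
    (hα0 : ∀ i ∈ A, 0 ≤ α i) (hα1 : ∑ i ∈ A, α i = 1) (hx : x = ∑ i ∈ A, α i • p i)
    (hle : ∀ i ∈ A, ℓ x ≤ ℓ (p i)) {i : ι} (hi : i ∈ A) (hαi : 0 < α i) : ℓ (p i) = ℓ x := by
  have hsum : ∑ j ∈ A, α j * (ℓ (p j) - ℓ x) = 0 :=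
    calc ∑ j ∈ A, α j * (ℓ (p j) - ℓ x)
        = ℓ (∑ j ∈ A, α j • p j) - (∑ j ∈ A, α j) * ℓ x := by
          simp only [mul_sub, Finset.sum_sub_distrib, Finset.sum_mul, map_sum, map_smul,
            smul_eq_mul]
      _ = 0 := by rw [← hx, hα1, one_mul, sub_self]
  have hterm := (Finset.sum_eq_zero_iff_of_nonneg fun j hj =>
    mul_nonneg (hα0 j hj) (sub_nonneg.2 (hle j hj))).1 hsum i hi
  linarith [(mul_eq_zero.1 hterm).resolve_left hαi.ne']

theorem optimality_iff_gaps_zero_general {n : ℕ}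
    (P : Set (EuclideanSpace ℝ (Fin n))) (f : EuclideanSpace ℝ (Fin n) → ℝ)
    (hP : Convex ℝ P) (hf : ConvexOn ℝ P f)
    (A : Finset (EuclideanSpace ℝ (Fin n))) (hA : ∀ s ∈ A, s ∈ P)
    (α : EuclideanSpace ℝ (Fin n) → ℝ) (hα0 : ∀ s ∈ A, 0 ≤ α s)
    (hα1 : ∑ s ∈ A, α s = 1)
    (x : EuclideanSpace ℝ (Fin n)) (hx : x = ∑ s ∈ A, α s • s) (hxP : x ∈ P)
    (g : EuclideanSpace ℝ (Fin n)) (hg : HasGradientAt f g x)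
    (wp wm : ℝ)
    (hwp : IsGreatest {r | ∃ s ∈ P, r = ⟪g, x - s⟫} wp)
    (hwm : IsGreatest {r | ∃ u ∈ A.filter (fun s => 0 < α s),
        ∃ v ∈ A.filter (fun s => 0 < α s), r = ⟪g, v - u⟫} wm) :
    ((wp = 0 ∧ wm = 0) → ∀ y ∈ P, f x ≤ f y) ∧
    ((∀ y ∈ P, f x ≤ f y) → (wp = 0 ∧ wm = 0)) := by
  have hf' : HasFDerivWithinAt f (InnerProductSpace.toDual ℝ _ g) P x :=
    hg.hasFDerivAt.hasFDerivWithinAt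
  refine ⟨fun ⟨hwp0, _⟩ => hf.isMinOn_of_hasFDerivWithinAt hxP hf' fun y hy => ?_,
    fun hmin => ?_⟩
  · have hgap : ⟪g, x - y⟫ ≤ 0 := hwp0 ▸ hwp.2 ⟨y, hy, rfl⟩
    simp only [InnerProductSpace.toDual_apply_apply, inner_sub_right] at hgap ⊢
    linarith
  have hle : ∀ s ∈ P, ⟪g, x⟫ ≤ ⟪g, s⟫ := fun s hs => by
    simpa [inner_sub_right] using IsMinOn.hasFDerivWithinAt_sub_nonneg hmin hP hxP hs hf'
  have hsupp : ∀ s ∈ A.filter (fun s => 0 < α s), ⟪g, s⟫ = ⟪g, x⟫ := fun s hs => by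
    rw [Finset.mem_filter] at hs
    exact (innerₛₗ ℝ g).apply_eq_of_forall_le_of_eq_sum_smul hα0 hα1 hx
      (fun s hs => hle s (hA s hs)) hs.1 hs.2
  obtain ⟨s, hsA, hαs⟩ := Finset.exists_lt_of_sum_lt (s := A) (f := fun _ => 0) (g := α)
    (by simp [hα1])
  have hs : s ∈ A.filter (fun s => 0 < α s) := Finset.mem_filter.2 ⟨hsA, hαs⟩
  refine ⟨hwp.unique ⟨⟨x, hxP, by simp⟩, ?_⟩, hwm.unique ⟨⟨s, hs, s, hs, by simp⟩, ?_⟩⟩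
  · rintro _ ⟨y, hy, rfl⟩
    linarith [hle y hy, inner_sub_right (𝕜 := ℝ) g x y]
  · rintro _ ⟨u, hu, v, hv, rfl⟩
    rw [inner_sub_right, hsupp u hu, hsupp v hv, sub_self]

theorem optimality_iff_gaps_zero {n : ℕ}
    (P : Set (EuclideanSpace ℝ (Fin n))) (f : EuclideanSpace ℝ (Fin n) → ℝ)
    (hP : Convex ℝ P) (hPc : IsCompact P) (hf : ConvexOn ℝ P f)
    (A : Finset (EuclideanSpace ℝ (Fin n))) (hA : ∀ s ∈ A, s ∈ P)
    (α : EuclideanSpace ℝ (Fin n) → ℝ) (hα0 : ∀ s ∈ A, 0 ≤ α s)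
    (hα1 : ∑ s ∈ A, α s = 1)
    (x : EuclideanSpace ℝ (Fin n)) (hx : x = ∑ s ∈ A, α s • s) (hxP : x ∈ P)
    (g : EuclideanSpace ℝ (Fin n)) (hg : HasGradientAt f g x)
    (wp wm : ℝ)
    (hwp : IsGreatest {r | ∃ s ∈ P, r = ⟪g, x - s⟫} wp)
    (hwm : IsGreatest {r | ∃ u ∈ A.filter (fun s => 0 < α s),
        ∃ v ∈ A.filter (fun s => 0 < α s), r = ⟪g, v - u⟫} wm) :
    ((wp = 0 ∧ wm = 0) → ∀ y ∈ P, f x ≤ f y) ∧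
    ((∀ y ∈ P, f x ≤ f y) → (wp = 0 ∧ wm = 0)) :=
  optimality_iff_gaps_zero_general P f hP hf A hA α hα0 hα1 x hx hxP g hg wp wm hwp hwm
end

section
/- Let (h_i)_{i=1}^{n+1} be a positive non-increasing sequence and (T_i)_{i=1}^n, c, T_max > 0 such that h_i − h_{i+1} ≥ (c T_i / T_max) h_i for all i ∈ [n], with c T_i ≤ T_max. Then Σ_{i=1}^n T_i ≤ (T_max / c) · ln(h₁ / h_{n+1}). -/
/-!
Each successful step shrinks `h` by the factor `1 - κ Tᵢ` with `κ = c / T_max`, and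
`ln x ≥ 1 - 1/x` turns this into `κ Tᵢ ≤ ln hᵢ - ln hᵢ₊₁`; summing, the logarithms telescope.
-/

open Finset Real

theorem Finset.sum_Icc_sub_succ {M : Type*} [AddCommGroup M] (f : ℕ → M) (n : ℕ) :
    ∑ i ∈ Icc 1 n, (f i - f (i + 1)) = f 1 - f (n + 1) := by
  rw [← Ico_add_one_right_eq_Icc, ← neg_sub, ← sum_Ico_sub f (by omega : 1 ≤ n + 1), ← sum_neg_distrib]
  simp only [neg_sub]

theorem Real.sub_div_le_log_div {a b : ℝ} (ha : 0 < a) (hb : 0 < b) :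
    (a - b) / a ≤ log (a / b) :=
  calc (a - b) / a = 1 - (a / b)⁻¹ := by field_simp
    _ ≤ log (a / b) := one_sub_inv_le_log_of_pos (div_pos ha hb)

theorem le_inv_mul_log_div_of_mul_le_sub {κ t a b : ℝ} (hκ : 0 < κ) (ha : 0 < a) (hb : 0 < b)
    (h : κ * t * a ≤ a - b) : t ≤ κ⁻¹ * log (a / b) := by
  rw [le_inv_mul_iff₀ hκ]
  calc κ * t ≤ (a - b) / a := (le_div_iff₀ ha).2 h
    _ ≤ log (a / b) := sub_div_le_log_div ha hb

theorem time_bound_successful_steps_general (n : ℕ) (h T : ℕ → ℝ) (c Tmax : ℝ)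
    (hc : 0 < c) (hTmax : 0 < Tmax)
    (hpos : ∀ i ∈ Finset.Icc 1 (n + 1), 0 < h i)
    (hdec : ∀ i ∈ Finset.Icc 1 n, h i - h (i + 1) ≥ (c * T i / Tmax) * h i) :
    ∑ i ∈ Finset.Icc 1 n, T i ≤ (Tmax / c) * Real.log (h 1 / h (n + 1)) := by
  have hpos' (i : ℕ) (hi : i ∈ Icc 1 n) : 0 < h i ∧ 0 < h (i + 1) := by
    obtain ⟨hi1, hin⟩ := mem_Icc.1 hi
    exact ⟨hpos i (mem_Icc.2 ⟨hi1, by omega⟩), hpos (i + 1) (mem_Icc.2 ⟨by omega, by omega⟩)⟩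
  have step (i : ℕ) (hi : i ∈ Icc 1 n) : T i ≤ Tmax / c * (log (h i) - log (h (i + 1))) := by
    obtain ⟨hhi, hhi'⟩ := hpos' i hi
    rw [← log_div hhi.ne' hhi'.ne', ← inv_div]
    refine le_inv_mul_log_div_of_mul_le_sub (div_pos hc hTmax) hhi hhi' ?_
    simpa only [div_mul_eq_mul_div] using hdec i hi
  calc ∑ i ∈ Icc 1 n, T i ≤ ∑ i ∈ Icc 1 n, Tmax / c * (log (h i) - log (h (i + 1))) :=
        sum_le_sum step
    _ = Tmax / c * log (h 1 / h (n + 1)) := by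
        rw [← mul_sum, sum_Icc_sub_succ (fun i ↦ log (h i)),
          log_div (hpos 1 (by simp)).ne' (hpos (n + 1) (by simp)).ne']

theorem time_bound_successful_steps (n : ℕ) (h T : ℕ → ℝ) (c Tmax : ℝ)
    (hc : 0 < c) (hTmax : 0 < Tmax)
    (hpos : ∀ i ∈ Finset.Icc 1 (n + 1), 0 < h i)
    (hmono : ∀ i ∈ Finset.Icc 1 n, h (i + 1) ≤ h i)
    (hTpos : ∀ i ∈ Finset.Icc 1 n, 0 < T i)
    (hTle : ∀ i ∈ Finset.Icc 1 n, c * T i ≤ Tmax)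
    (hdec : ∀ i ∈ Finset.Icc 1 n, h i - h (i + 1) ≥ (c * T i / Tmax) * h i) :
    ∑ i ∈ Finset.Icc 1 n, T i ≤ (Tmax / c) * Real.log (h 1 / h (n + 1)) :=
  time_bound_successful_steps_general n h T c Tmax hc hTmax hpos hdec
end

section
/- Let Φ = {d ∈ ℝ^{m+1} : d₁ ≥ 0, ..., d_m ≥ 0, d₀ + d₁ + ... + d_m = 0}, and let c ∈ ℝ^{m+1}. Let δ ∈ ℝ be the unique value such that (c₀ − δ) + Σ_{i=1}^m min{c_i − δ, 0} = 0, and define c^δ by c^δ₀ = c₀ − δ and c^δ_i = min{c_i − δ, 0} for i ∈ [m]. Then c^δ is the Euclidean projection of c onto −Φ, i.e., c^δ ∈ −Φ and ‖c − c^δ‖ ≤ ‖c − d‖ for all d ∈ −Φ. -/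
theorem shadow_is_projection (m : ℕ) (c : EuclideanSpace ℝ (Fin (m + 1))) (δ : ℝ)
    (hδ : (c 0 - δ) + ∑ i ∈ Finset.univ.erase (0 : Fin (m + 1)), min (c i - δ) 0 = 0)
    (cδ : EuclideanSpace ℝ (Fin (m + 1)))
    (hcδ : ∀ i : Fin (m + 1), cδ i = if i = 0 then c 0 - δ else min (c i - δ) 0) :
    ((∀ i : Fin (m + 1), i ≠ 0 → cδ i ≤ 0) ∧ ∑ i, cδ i = 0) ∧
    ∀ d : EuclideanSpace ℝ (Fin (m + 1)),
      ((∀ i : Fin (m + 1), i ≠ 0 → d i ≤ 0) ∧ ∑ i, d i = 0) → ‖c - cδ‖ ≤ ‖c - d‖ := by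
  set S := Finset.univ.erase (0 : Fin (m + 1)) with hSdef
  have hc0 : cδ 0 = c 0 - δ := by rw [hcδ]; simp
  have hcS : ∀ i ∈ S, cδ i = min (c i - δ) 0 := by
    intro i hi
    rw [hcδ, if_neg (Finset.ne_of_mem_erase hi)]
  have hsplit : ∀ f : Fin (m + 1) → ℝ, ∑ i, f i = (∑ i ∈ S, f i) + f 0 := by
    intro f
    rw [Finset.sum_erase_add _ _ (Finset.mem_univ (0 : Fin (m + 1)))]
  have hsumcδ : ∑ i, cδ i = 0 := by
    rw [hsplit, hc0, Finset.sum_congr rfl hcS]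
    linarith [hδ]
  refine ⟨⟨fun i hi => by rw [hcδ, if_neg hi]; exact min_le_right _ _, hsumcδ⟩, ?_⟩
  rintro d ⟨hd1, hd2⟩
  have hd0 : d 0 = -∑ i ∈ S, d i := by
    have := hsplit d
    rw [hd2] at this; linarith
  have hA : c 0 - δ = -∑ i ∈ S, min (c i - δ) 0 := by linarith [hδ]
  -- key inner product inequality
  have key : 0 ≤ ∑ i, (c i - cδ i) * (cδ i - d i) := by
    have heq : ∑ i, (c i - cδ i) * (cδ i - d i)
        = ∑ i ∈ S, ((c i - min (c i - δ) 0) * (min (c i - δ) 0 - d i)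
            + δ * (d i - min (c i - δ) 0)) := by
      rw [hsplit, hc0, Finset.sum_congr rfl (fun i hi => by rw [hcS i hi]),
        Finset.sum_add_distrib]
      have : (c 0 - (c 0 - δ)) * ((c 0 - δ) - d 0)
          = ∑ i ∈ S, δ * (d i - min (c i - δ) 0) := by
        rw [← Finset.mul_sum, Finset.sum_sub_distrib]
        linear_combination δ * hA - δ * hd0
      rw [this]
    rw [heq]
    apply Finset.sum_nonneg
    intro i hi
    have hdi : d i ≤ 0 := hd1 i (Finset.ne_of_mem_erase hi)
    rcases le_total (c i - δ) 0 with h | h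
    · rw [min_eq_left h]; nlinarith
    · rw [min_eq_right h]; nlinarith
  rw [EuclideanSpace.norm_eq, EuclideanSpace.norm_eq]
  apply Real.sqrt_le_sqrt
  simp only [PiLp.sub_apply, Real.norm_eq_abs, sq_abs]
  have expand : ∑ i, (c i - d i) ^ 2
      = ∑ i, (c i - cδ i) ^ 2 + 2 * ∑ i, (c i - cδ i) * (cδ i - d i)
        + ∑ i, (cδ i - d i) ^ 2 := by
    rw [Finset.mul_sum, ← Finset.sum_add_distrib, ← Finset.sum_add_distrib]
    exact Finset.sum_congr rfl (fun i _ => by ring)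
  have hnn : 0 ≤ ∑ i, (cδ i - d i) ^ 2 := Finset.sum_nonneg fun i _ => sq_nonneg _
  linarith
end

section
/- Let c* be the Euclidean projection of c ∈ ℝ^{m+1} onto the cone Φ̄ = {d ∈ ℝ^{m+1} : d_i ≤ 0 for all i ∈ [m], Σ_{i=0}^m d_i = 0}, and let I = {i ∈ [m] : c*_i < 0}. Then there is a constant δ* ∈ ℝ with c*_i = c_i − δ* for all i ∈ {0} ∪ I, and c_k − δ* ≥ 0 for all k ∈ [m] \ I. -/
/-!
The residual `r = c - c*` of a projection onto a convex set satisfies `⟪r, d - c*⟫ ≤ 0` for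
every `d` in the set. Moving mass `t` of `c*` from coordinate `0` to a coordinate `i ≠ 0`
stays in the cone as long as `c*ᵢ + t ≤ 0`, so `t (rᵢ - r₀) ≤ 0` for all such `t`. Taking `t = -1`
gives `r₀ ≤ rᵢ`, and if `c*ᵢ < 0` then `t = -c*ᵢ > 0` gives `rᵢ ≤ r₀`. Hence `δ* = r₀` works.
-/

open Finset
open scoped InnerProductSpace

theorem real_inner_sub_sub_nonpos_of_isMinOn {F : Type*} [NormedAddCommGroup F]
    [InnerProductSpace ℝ F] {K : Set F} (hK : Convex ℝ K) {u v : F} (hv : v ∈ K)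
    (hmin : IsMinOn (fun w => ‖u - w‖) K v) : ∀ w ∈ K, ⟪u - v, w - v⟫_ℝ ≤ 0 := by
  have : Nonempty K := ⟨⟨v, hv⟩⟩
  refine (norm_eq_iInf_iff_real_inner_le_zero hK hv).1 (le_antisymm ?_ ?_)
  · exact le_ciInf fun w => isMinOn_iff.1 hmin w w.2
  · exact ciInf_le ⟨0, Set.forall_mem_range.2 fun _ => norm_nonneg _⟩ (⟨v, hv⟩ : K)

section ShadowCone

variable {ι : Type*} [Fintype ι]

/-- The cone `Φ̄` of the paper, with `i₀` as its unconstrained coordinate. -/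
def shadowCone (i₀ : ι) : Set (EuclideanSpace ℝ ι) :=
  {d | (∀ i, i ≠ i₀ → d i ≤ 0) ∧ ∑ i, d i = 0}

theorem convex_shadowCone (i₀ : ι) : Convex ℝ (shadowCone i₀) := by
  rintro x ⟨hx_nonpos, hx_sum⟩ y ⟨hy_nonpos, hy_sum⟩ a b ha hb -
  refine ⟨fun i hi => ?_, ?_⟩
  · simp only [PiLp.add_apply, PiLp.smul_apply, smul_eq_mul]
    nlinarith [hx_nonpos i hi, hy_nonpos i hi]
  · simp [sum_add_distrib, ← mul_sum, hx_sum, hy_sum]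

variable [DecidableEq ι]

theorem add_single_sub_single_mem_shadowCone {i₀ i : ι} {d : EuclideanSpace ℝ ι}
    (hd : d ∈ shadowCone i₀) (hi : i ≠ i₀) {t : ℝ} (ht : d i + t ≤ 0) :
    d + (EuclideanSpace.single i t - EuclideanSpace.single i₀ t) ∈ shadowCone i₀ := by
  refine ⟨fun j hj => ?_, ?_⟩
  · by_cases hji : j = i
    · subst hji; simpa [hj] using ht
    · simpa [hji, hj] using hd.1 j hj
  · simp [sum_add_distrib, hd.2]

theorem real_inner_single_sub_single (x : EuclideanSpace ℝ ι) (i j : ι) (t : ℝ) :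
    ⟪x, EuclideanSpace.single i t - EuclideanSpace.single j t⟫_ℝ = t * (x i - x j) := by
  simp [inner_sub_right, EuclideanSpace.inner_single_right, mul_sub]

variable {i₀ : ι} {u v : EuclideanSpace ℝ ι}

theorem mul_sub_nonpos_of_isMinOn_shadowCone (hv : v ∈ shadowCone i₀)
    (hmin : IsMinOn (fun w => ‖u - w‖) (shadowCone i₀) v) {i : ι} (hi : i ≠ i₀) {t : ℝ}
    (ht : v i + t ≤ 0) : t * ((u - v) i - (u - v) i₀) ≤ 0 := by
  have h := real_inner_sub_sub_nonpos_of_isMinOn (convex_shadowCone i₀) hv hmin _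
    (add_single_sub_single_mem_shadowCone hv hi ht)
  rwa [add_sub_cancel_left, real_inner_single_sub_single] at h

theorem sub_apply_le_of_isMinOn_shadowCone (hv : v ∈ shadowCone i₀)
    (hmin : IsMinOn (fun w => ‖u - w‖) (shadowCone i₀) v) {i : ι} (hi : i ≠ i₀) :
    (u - v) i₀ ≤ (u - v) i := by
  have h := mul_sub_nonpos_of_isMinOn_shadowCone hv hmin hi (t := -1) (by linarith [hv.1 i hi])
  linarith

theorem sub_apply_eq_of_isMinOn_shadowCone (hv : v ∈ shadowCone i₀)
    (hmin : IsMinOn (fun w => ‖u - w‖) (shadowCone i₀) v) {i : ι} (hneg : v i < 0) :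
    (u - v) i = (u - v) i₀ := by
  rcases eq_or_ne i i₀ with rfl | hi
  · rfl
  have h := mul_sub_nonpos_of_isMinOn_shadowCone hv hmin hi (t := -v i) (by linarith)
  have h_le : (u - v) i - (u - v) i₀ ≤ 0 := nonpos_of_mul_nonpos_right h (by linarith)
  linarith [sub_apply_le_of_isMinOn_shadowCone hv hmin hi]

end ShadowCone

theorem projection_characterization (m : ℕ) (c cstar : EuclideanSpace ℝ (Fin (m + 1)))
    (hmem : (∀ i : Fin (m + 1), i ≠ 0 → cstar i ≤ 0) ∧ ∑ i, cstar i = 0)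
    (hproj : ∀ d : EuclideanSpace ℝ (Fin (m + 1)),
      ((∀ i : Fin (m + 1), i ≠ 0 → d i ≤ 0) ∧ ∑ i, d i = 0) → ‖c - cstar‖ ≤ ‖c - d‖) :
    ∃ δstar : ℝ,
      (∀ i : Fin (m + 1), (i = 0 ∨ cstar i < 0) → cstar i = c i - δstar) ∧
      (∀ k : Fin (m + 1), k ≠ 0 → ¬ cstar k < 0 → 0 ≤ c k - δstar) := by
  have hmin : IsMinOn (fun w => ‖c - w‖) (shadowCone 0) cstar := isMinOn_iff.2 hproj
  refine ⟨c 0 - cstar 0, fun i hi => ?_, fun k hk hk_nonneg => ?_⟩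
  · rcases hi with rfl | hneg
    · ring
    have h := sub_apply_eq_of_isMinOn_shadowCone hmem hmin hneg
    simp only [PiLp.sub_apply] at h
    linarith
  · have hk_zero : cstar k = 0 := le_antisymm (hmem.1 k hk) (not_lt.1 hk_nonneg)
    have h := sub_apply_le_of_isMinOn_shadowCone hmem hmin hk
    simp only [PiLp.sub_apply, hk_zero] at h
    linarith
end

section
/- Frank-Wolfe step decrease: let f be a function on a compact convex set P with bounded curvature constant C > 0, x ∈ P, g = ∇f(x), s ∈ argmin_{s'∈P} ⟨g, s'⟩, and y ∈ argmin_{y'∈[x,s]} f(y'). Then f(x) − f(y) ≥ min{ (w⁺(x))²/(2C), w⁺(x)/2 }, where w⁺(x) = ⟨g, x − s⟩. -/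
open RealInnerProductSpace

theorem fw_step_decrease {n : ℕ}
    (P : Set (EuclideanSpace ℝ (Fin n))) (hP : Convex ℝ P)
    (f : EuclideanSpace ℝ (Fin n) → ℝ) (C : ℝ) (hC : 0 < C)
    (x : EuclideanSpace ℝ (Fin n)) (hx : x ∈ P)
    (g : EuclideanSpace ℝ (Fin n)) (hg : HasGradientAt f g x)
    (hcurv : ∀ x' ∈ P, ∀ s' ∈ P, ∀ γ ∈ Set.Icc (0 : ℝ) 1,
      f (γ • s' + (1 - γ) • x') ≤ f x' - γ * ⟪g, x' - s'⟫ + C * γ ^ 2 / 2)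
    (s : EuclideanSpace ℝ (Fin n)) (hs : s ∈ P) (hsmin : ∀ s' ∈ P, ⟪g, s⟫ ≤ ⟪g, s'⟫)
    (y : EuclideanSpace ℝ (Fin n))
    (hy : ∃ γ ∈ Set.Icc (0 : ℝ) 1, y = γ • s + (1 - γ) • x)
    (hymin : ∀ γ ∈ Set.Icc (0 : ℝ) 1, f y ≤ f (γ • s + (1 - γ) • x)) :
    f x - f y ≥ min (⟪g, x - s⟫ ^ 2 / (2 * C)) (⟪g, x - s⟫ / 2) := by
  set w : ℝ := ⟪g, x - s⟫ with hwdef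
  have hw : 0 ≤ w := by
    have := hsmin x hx
    have h1 : w = ⟪g, x⟫ - ⟪g, s⟫ := by
      rw [hwdef, inner_sub_right]
    linarith
  by_cases h : w ≤ C
  · -- use γ = w / C
    have hγ : w / C ∈ Set.Icc (0 : ℝ) 1 := by
      constructor
      · positivity
      · rw [div_le_one hC]; exact h
    have h1 := hymin _ hγ
    have h2 := hcurv x hx s hs _ hγ
    have key : f y ≤ f x - w ^ 2 / (2 * C) := by
      have : (w / C) * w - C * (w / C) ^ 2 / 2 = w ^ 2 / (2 * C) := by
        field_simp; ring
      nlinarith [h1.trans h2]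
    have : min (w ^ 2 / (2 * C)) (w / 2) ≤ w ^ 2 / (2 * C) := min_le_left _ _
    linarith
  · -- use γ = 1
    push_neg at h
    have hγ : (1 : ℝ) ∈ Set.Icc (0 : ℝ) 1 := by norm_num
    have h1 := hymin _ hγ
    have h2 := hcurv x hx s hs _ hγ
    have key : f y ≤ f x - w + C / 2 := by nlinarith [h1.trans h2]
    have : min (w ^ 2 / (2 * C)) (w / 2) ≤ w / 2 := min_le_right _ _
    linarith
end

section
/- Validity preservation in BCG: suppose h(α) ≤ w⁺(α) ≤ w(α) ≤ w⁺(α) + w⁻(α) and the geometric strong convexity bound h(α) ≤ w(α)²/(2μ) hold. If Φ ≥ w(α)/2, then h(α) ≤ min{2Φ²/μ, 2Φ}. In particular, if w⁻(α) ≤ Φ/2 and w⁺(α) ≤ Φ/2, then w(α) ≤ Φ and the pair (α, min{w(α), Φ/2}) is valid, i.e., h(α) ≤ min{2Φ'²/μ, 2Φ'} for Φ' = min{w(α), Φ/2}. -/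
theorem bcg_validity (h wp wm w Φ μ : ℝ) (hμ : 0 < μ) (hnn : 0 ≤ h)
    (h1 : h ≤ wp) (h2 : wp ≤ w) (h3 : w ≤ wp + wm)
    (hgsc : h ≤ w ^ 2 / (2 * μ)) :
    (Φ ≥ w / 2 → h ≤ min (2 * Φ ^ 2 / μ) (2 * Φ)) ∧
    (wm ≤ Φ / 2 → wp ≤ Φ / 2 →
      w ≤ Φ ∧ h ≤ min (2 * (min w (Φ / 2)) ^ 2 / μ) (2 * min w (Φ / 2))) := by
  have hw0 : 0 ≤ w := le_trans hnn (h1.trans h2)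
  have hgsc' : h * (2 * μ) ≤ w ^ 2 := (le_div_iff₀ (by positivity)).mp hgsc
  constructor
  · intro hΦ
    refine le_min ?_ (by linarith)
    rw [le_div_iff₀ hμ]
    nlinarith [sq_nonneg (2 * Φ - w)]
  · intro hm hp
    have hwΦ : w ≤ Φ := by linarith
    refine ⟨hwΦ, le_min ?_ ?_⟩
    · rw [le_div_iff₀ hμ]
      rcases le_total w (Φ / 2) with hc | hc
      · rw [min_eq_left hc]; nlinarith [sq_nonneg w]
      · rw [min_eq_right hc]; nlinarith [sq_nonneg (Φ - w)]
    · rcases le_total w (Φ / 2) with hc | hc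
      · rw [min_eq_left hc]; linarith
      · rw [min_eq_right hc]; linarith
end

section
/- Good-step progress in BCG implies geometric decrease: let μ, ρ, K > 0 and suppose h ≤ min{2Φ²/μ, 2Φ} (validity) and h − h' ≥ min{ρΦ², Φ/(2K)} for h ≥ h' ≥ 0, Φ > 0. Then h − h' ≥ θ h with θ = min{ρμ/2, 1/(4K)}. -/
theorem bcg_good_step_geometric_decrease (μ ρ K h h' Φ : ℝ)
    (hμ : 0 < μ) (hρ : 0 < ρ) (hK : 0 < K) (hΦ : 0 < Φ)
    (hh' : 0 ≤ h') (hh : h' ≤ h)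
    (hvalid : h ≤ min (2 * Φ ^ 2 / μ) (2 * Φ))
    (hdec : h - h' ≥ min (ρ * Φ ^ 2) (Φ / (2 * K))) :
    h - h' ≥ min (ρ * μ / 2) (1 / (4 * K)) * h := by
  have h0 : 0 ≤ h := hh'.trans hh
  have h1 : h ≤ 2 * Φ ^ 2 / μ := le_trans hvalid (min_le_left _ _)
  have h2 : h ≤ 2 * Φ := le_trans hvalid (min_le_right _ _)
  have h1' : μ * h ≤ 2 * Φ ^ 2 := by
    rw [le_div_iff₀ hμ] at h1; nlinarith
  have key : min (ρ * μ / 2) (1 / (4 * K)) * h ≤ min (ρ * Φ ^ 2) (Φ / (2 * K)) := by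
    refine le_min ?_ ?_
    · calc min (ρ * μ / 2) (1 / (4 * K)) * h ≤ ρ * μ / 2 * h :=
            mul_le_mul_of_nonneg_right (min_le_left _ _) h0
        _ ≤ ρ * Φ ^ 2 := by nlinarith
    · calc min (ρ * μ / 2) (1 / (4 * K)) * h ≤ 1 / (4 * K) * h :=
            mul_le_mul_of_nonneg_right (min_le_right _ _) h0
        _ ≤ Φ / (2 * K) := by
            rw [show (1:ℝ)/(4*K)*h = h/(4*K) by ring, div_le_div_iff₀ (by positivity) (by positivity)]; nlinarith
  linarith
end
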